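/- arXiv:1307.0475 — 3 statements merged into one kernel-verified Lean document; each statement's English description precedes it below -/
import Mathlib

section
/- Let X₁, …, X_d be independent random variables each distributed as a standard Gaussian N(0,1). Then for any 0 < δ < 1, with probability at least 1 − δ, one has Σ_{i=1}^d X_i² ≤ d + 2·√(d·ln(1/δ)) + 2·ln(1/δ). -/
/-!
Chernoff bound. For a standard Gaussian `X` and `l < 1/2`, `E[exp (l X²)] = (1 - 2l)^(-1/2)`,
so `P(∑ Xᵢ² ≥ a) ≤ exp (-l a) (1 - 2l)^(-d/2)`; at the optimal `l = (1 - d/a)/2` this is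
`exp (-(a - d)/2) (a/d)^(d/2)`. For `a = d + 2√(dt) + 2t` and `s = √(t/d)` one has
`a/d = 1 + 2s + 2s² ≤ exp (2s)`, which makes the bound at most `exp (-t)`.
-/

open MeasureTheory ProbabilityTheory Real

lemma gaussianPDFReal_mul_exp_mul_sq (l x : ℝ) :
    gaussianPDFReal 0 1 x * exp (l * x ^ 2) = (√(2 * π))⁻¹ * exp (-(1 / 2 - l) * x ^ 2) := by
  simp only [gaussianPDFReal, NNReal.coe_one, mul_one, sub_zero]
  rw [mul_assoc, ← exp_add]
  ring_nf

lemma integral_exp_mul_sq_gaussianReal {l : ℝ} (hl : l < 1 / 2) :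
    ∫ x, exp (l * x ^ 2) ∂gaussianReal 0 1 = (√(1 - 2 * l))⁻¹ := by
  simp_rw [integral_gaussianReal_eq_integral_smul one_ne_zero, smul_eq_mul,
    gaussianPDFReal_mul_exp_mul_sq, integral_const_mul, integral_gaussian]
  have hl' : 0 < 1 - 2 * l := by linarith
  rw [show π / (1 / 2 - l) = 2 * π / (1 - 2 * l) by field_simp, sqrt_div' _ hl'.le]
  have : √(2 * π) ≠ 0 := by positivity
  field_simp

lemma integrable_exp_mul_sq_gaussianReal {l : ℝ} (hl : l < 1 / 2) :
    Integrable (fun x ↦ exp (l * x ^ 2)) (gaussianReal 0 1) :=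
  .of_integral_ne_zero <| by
    rw [integral_exp_mul_sq_gaussianReal hl]
    have : 0 < 1 - 2 * l := by linarith
    positivity

section Pi

variable {ι E : Type*} [Fintype ι] [MeasurableSpace E] {μ : Measure E} [SigmaFinite μ]

lemma integrable_exp_mul_sum_pi {g : E → ℝ} {t : ℝ}
    (hg : Integrable (fun x ↦ exp (t * g x)) μ) :
    Integrable (fun x : ι → E ↦ exp (t * ∑ i, g (x i))) (Measure.pi fun _ ↦ μ) := by
  simp_rw [Finset.mul_sum, exp_sum]
  exact .fintype_prod fun _ ↦ hg

lemma mgf_sum_pi (g : E → ℝ) (t : ℝ) :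
    mgf (fun x : ι → E ↦ ∑ i, g (x i)) (Measure.pi fun _ ↦ μ) t =
      mgf g μ t ^ Fintype.card ι := by
  simp_rw [mgf, Finset.mul_sum, exp_sum]
  exact integral_fintype_prod_eq_pow (ι := ι) (μ := μ) fun x ↦ exp (t * g x)

end Pi

section ChiSquare

variable {ι : Type*} [Fintype ι]

lemma mgf_sum_sq_gaussianReal_pi {l : ℝ} (hl : l < 1 / 2) :
    mgf (fun x : ι → ℝ ↦ ∑ i, x i ^ 2) (Measure.pi fun _ ↦ gaussianReal 0 1) l =
      (√(1 - 2 * l))⁻¹ ^ Fintype.card ι := by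
  rw [mgf_sum_pi (fun y ↦ y ^ 2), mgf, integral_exp_mul_sq_gaussianReal hl]

lemma measureReal_le_sum_sq_gaussianReal_pi_le [Nonempty ι] {a : ℝ}
    (ha : Fintype.card ι ≤ a) :
    (Measure.pi fun _ : ι ↦ gaussianReal 0 1).real {x | a ≤ ∑ i, x i ^ 2} ≤
      exp (-(a - Fintype.card ι) / 2) * √(a / Fintype.card ι) ^ Fintype.card ι := by
  set d : ℝ := (Fintype.card ι : ℝ)
  have hd : 0 < d := Nat.cast_pos.mpr Fintype.card_pos
  have ha0 : 0 < a := hd.trans_le ha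
  set l := (1 - d / a) / 2 with hl_def
  have hl0 : 0 ≤ l := by
    have : d / a ≤ 1 := (div_le_one ha0).mpr ha
    linarith [hl_def]
  have hl : l < 1 / 2 := by
    have : 0 < d / a := by positivity
    linarith [hl_def]
  calc _ ≤ exp (-l * a) * mgf (fun x : ι → ℝ ↦ ∑ i, x i ^ 2)
          (Measure.pi fun _ ↦ gaussianReal 0 1) l :=
        measure_ge_le_exp_mul_mgf a hl0
          (integrable_exp_mul_sum_pi (integrable_exp_mul_sq_gaussianReal hl))
    _ = _ := by
      rw [mgf_sum_sq_gaussianReal_pi hl, ← sqrt_inv,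
        show 1 - 2 * l = d / a by rw [hl_def]; ring, inv_div, show -l * a = -(a - d) / 2 by
          rw [hl_def]; field_simp]

end ChiSquare

lemma exp_neg_half_mul_sqrt_pow_le_exp_neg {d : ℕ} (hd : 0 < d) {t : ℝ} (ht : 0 ≤ t) :
    exp (-((d + 2 * √(d * t) + 2 * t) - d) / 2) * √((d + 2 * √(d * t) + 2 * t) / d) ^ d ≤
      exp (-t) := by
  have hd : (0 : ℝ) < d := by exact_mod_cast hd
  set s := √(t / d)
  have hs : 0 ≤ s := sqrt_nonneg _
  have hdt : √(d * t) = d * s := by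
    rw [show (d : ℝ) * t = d ^ 2 * (t / d) by field_simp, sqrt_mul (sq_nonneg _), sqrt_sq hd.le]
  have hratio : (d + 2 * √(d * t) + 2 * t) / d = 1 + 2 * s + (2 * s) ^ 2 / 2 := by
    rw [hdt, mul_pow, sq_sqrt (by positivity)]
    field_simp
  have hroot : √((d + 2 * √(d * t) + 2 * t) / d) ≤ exp s := by
    rw [sqrt_le_left (exp_pos s).le, hratio, ← exp_nat_mul]
    exact_mod_cast quadratic_le_exp_of_nonneg (by positivity)
  calc _ ≤ exp (-((d + 2 * √(d * t) + 2 * t) - d) / 2) * exp s ^ d := by gcongr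
    _ = exp (-t) := by
      rw [← exp_nat_mul, ← exp_add, hdt]
      ring_nf

lemma ofReal_one_sub_le_of_measureReal_compl_le {α : Type*} [MeasurableSpace α]
    {μ : Measure α} [IsProbabilityMeasure μ] {s : Set α} {δ : ℝ} (h : μ.real sᶜ ≤ δ) :
    ENNReal.ofReal (1 - δ) ≤ μ s := by
  calc ENNReal.ofReal (1 - δ) ≤ ENNReal.ofReal (1 - μ.real sᶜ) := by gcongr
    _ = 1 - μ sᶜ := by
      rw [ENNReal.ofReal_sub _ measureReal_nonneg, ENNReal.ofReal_one, ofReal_measureReal]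
    _ ≤ μ s := tsub_le_iff_right.2 (measure_univ (μ := μ) ▸ measure_univ_le_add_compl s)

/-- **Tail bound for the χ² distribution.** If `X₁, …, X_d` are i.i.d. standard
Gaussians, then for any `0 < δ < 1`, with probability at least `1 - δ`,
`∑ i, X i ^ 2 ≤ d + 2√(d ln(1/δ)) + 2 ln(1/δ)`. -/
theorem chi_square_tail_bound (d : ℕ) (δ : ℝ) (hδ0 : 0 < δ) (hδ1 : δ < 1) :
    ENNReal.ofReal (1 - δ) ≤
      (Measure.pi fun _ : Fin d => gaussianReal 0 1)
        {x | ∑ i, (x i) ^ 2 ≤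
          (d : ℝ) + 2 * Real.sqrt (d * Real.log (1 / δ)) + 2 * Real.log (1 / δ)} := by
  set t := log (1 / δ) with ht_def
  have ht : 0 ≤ t := log_nonneg (one_le_one_div hδ0 hδ1.le)
  have hδ : exp (-t) = δ := by rw [ht_def, one_div, log_inv, neg_neg, exp_log hδ0]
  apply ofReal_one_sub_le_of_measureReal_compl_le
  rcases Nat.eq_zero_or_pos d with rfl | hd
  · simp [ht, hδ0.le]
  have : Nonempty (Fin d) := Fin.pos_iff_nonempty.mp hd
  set a : ℝ := d + 2 * √(d * t) + 2 * t
  have hda : (d : ℝ) ≤ a := by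
    have := sqrt_nonneg (d * t)
    linarith
  calc _ ≤ (Measure.pi fun _ : Fin d => gaussianReal 0 1).real {x | a ≤ ∑ i, x i ^ 2} :=
        measureReal_mono fun _ hx ↦ (not_le.mp (Set.notMem_ofPred_iff.mp hx)).le
    _ ≤ exp (-(a - d) / 2) * √(a / d) ^ d := by
        simpa using measureReal_le_sum_sq_gaussianReal_pi_le (ι := Fin d) (by simpa using hda)
    _ ≤ δ := hδ ▸ exp_neg_half_mul_sqrt_pow_le_exp_neg hd ht
end

section
/- Let A ∈ ℝ^{n×n} be a matrix, let P_k ∈ ℝ^{n×n} and P̂_k ∈ ℝ^{n×n} be orthogonal projection matrices (symmetric and idempotent), and let ε ≥ 0. If ‖A − P̂_k·A‖_F ≤ (1 + ε)·‖A − P_k·A‖_F, then ‖P_k·A − P̂_k·P_k·A‖_F ≤ (3 + ε)·‖A − P_k·A‖_F. -/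
open Matrix

/-- The Frobenius norm of a matrix. -/
noncomputable def frobNorm {n m : ℕ} (M : Matrix (Fin n) (Fin m) ℝ) : ℝ :=
  Real.sqrt (∑ i, ∑ j, (M i j) ^ 2)

lemma frobNorm_nonneg {n m : ℕ} (M : Matrix (Fin n) (Fin m) ℝ) : 0 ≤ frobNorm M :=
  Real.sqrt_nonneg _

lemma sumSq_eq_trace {n m : ℕ} (M : Matrix (Fin n) (Fin m) ℝ) :
    (∑ i, ∑ j, (M i j) ^ 2) = Matrix.trace (Mᵀ * M) := by
  simp only [Matrix.trace, Matrix.diag, Matrix.mul_apply, Matrix.transpose_apply, sq]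
  exact Finset.sum_comm

lemma frobNorm_proj_mul_le {n m : ℕ} (Q : Matrix (Fin n) (Fin n) ℝ)
    (hQs : Q.IsSymm) (hQi : Q * Q = Q) (M : Matrix (Fin n) (Fin m) ℝ) :
    frobNorm (Q * M) ≤ frobNorm M := by
  apply Real.sqrt_le_sqrt
  have key : (∑ i, ∑ j, ((Q * M) i j) ^ 2) + (∑ i, ∑ j, (((1 - Q) * M : Matrix (Fin n) (Fin m) ℝ) i j) ^ 2)
      = ∑ i, ∑ j, (M i j) ^ 2 := by
    rw [sumSq_eq_trace, sumSq_eq_trace, sumSq_eq_trace]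
    have h1 : (Q * M)ᵀ * (Q * M) = Mᵀ * (Q * M) := by
      rw [Matrix.transpose_mul, hQs.eq, Matrix.mul_assoc, ← Matrix.mul_assoc Q Q M, hQi]
    have h2 : ((1 - Q) * M)ᵀ * ((1 - Q) * M) = Mᵀ * ((1 - Q) * M) := by
      have hs : (1 - Q : Matrix (Fin n) (Fin n) ℝ)ᵀ = 1 - Q := by
        rw [Matrix.transpose_sub, Matrix.transpose_one, hQs.eq]
      have hi : (1 - Q) * (1 - Q) = 1 - Q := by
        simp [Matrix.sub_mul, Matrix.mul_sub, hQi]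
      rw [Matrix.transpose_mul, hs, Matrix.mul_assoc, ← Matrix.mul_assoc (1 - Q) (1 - Q) M, hi]
    rw [h1, h2, ← Matrix.trace_add, ← Matrix.mul_add]
    congr 1
    rw [← Matrix.add_mul]
    simp
  have hnn : 0 ≤ ∑ i, ∑ j, (((1 - Q) * M : Matrix (Fin n) (Fin m) ℝ) i j) ^ 2 :=
    Finset.sum_nonneg fun i _ => Finset.sum_nonneg fun j _ => sq_nonneg _
  linarith

attribute [local instance] Matrix.frobeniusSeminormedAddCommGroup

lemma frobNorm_eq_norm {n m : ℕ} (M : Matrix (Fin n) (Fin m) ℝ) : frobNorm M = ‖M‖ := by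
  unfold frobNorm
  rw [Matrix.frobenius_norm_def, Real.sqrt_eq_rpow]
  congr 1
  simp [Real.rpow_two, Real.norm_eq_abs, sq_abs, sq]

/-- If `P_k` and `P̂_k` are orthogonal projections and
`‖A − P̂_k A‖_F ≤ (1 + ε)‖A − P_k A‖_F`, then
`‖P_k A − P̂_k P_k A‖_F ≤ (3 + ε)‖A − P_k A‖_F`. -/
theorem frob_bound_of_proj_approx
    (n : ℕ) (A Pk Phat : Matrix (Fin n) (Fin n) ℝ) (ε : ℝ) (hε : 0 ≤ ε)
    (hPk_symm : Pk.IsSymm) (hPk_idem : Pk * Pk = Pk)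
    (hPhat_symm : Phat.IsSymm) (hPhat_idem : Phat * Phat = Phat)
    (h : frobNorm (A - Phat * A) ≤ (1 + ε) * frobNorm (A - Pk * A)) :
    frobNorm (Pk * A - Phat * (Pk * A)) ≤ (3 + ε) * frobNorm (A - Pk * A) := by
  have hQs : (1 - Phat : Matrix (Fin n) (Fin n) ℝ).IsSymm := by
    rw [Matrix.IsSymm, Matrix.transpose_sub, Matrix.transpose_one, hPhat_symm.eq]
  have hQi : (1 - Phat) * (1 - Phat) = (1 - Phat : Matrix (Fin n) (Fin n) ℝ) := by
    simp [Matrix.sub_mul, Matrix.mul_sub, hPhat_idem]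
  have hdecomp : Pk * A - Phat * (Pk * A) = (A - Phat * A) - (1 - Phat) * (A - Pk * A) := by
    simp only [Matrix.sub_mul, Matrix.mul_sub, Matrix.one_mul]
    abel
  have htri : frobNorm (Pk * A - Phat * (Pk * A)) ≤
      frobNorm (A - Phat * A) + frobNorm ((1 - Phat) * (A - Pk * A)) := by
    rw [hdecomp, frobNorm_eq_norm, frobNorm_eq_norm, frobNorm_eq_norm]
    exact norm_sub_le _ _
  have hc := frobNorm_proj_mul_le (1 - Phat) hQs hQi (A - Pk * A)
  have hnn := frobNorm_nonneg (A - Pk * A)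
  linarith
end

section
/- Let A and Ã be symmetric n×n real matrices. Let u₁, …, u_k be orthonormal eigenvectors of A corresponding to its k largest eigenvalues, and ũ₁, …, ũ_k orthonormal eigenvectors of Ã corresponding to its k largest eigenvalues, and set P_k = Σ_{i=1}^k u_i·u_i^T and P̃_k = Σ_{i=1}^k ũ_i·ũ_i^T. Let λ_k(A) denote the k-th largest eigenvalue of A and λ_{k+1}(Ã) the (k+1)-th largest eigenvalue of Ã. If λ_k(A) > λ_{k+1}(Ã), then ‖P_k − P̃_k‖₂ ≤ ‖A − Ã‖₂ / (λ_k(A) − λ_{k+1}(Ã)). -/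
open Matrix

/-- The spectral norm (largest singular value) of a matrix, as the operator norm of the
induced linear map between Euclidean spaces. -/
noncomputable def specNorm {n m : ℕ} (M : Matrix (Fin n) (Fin m) ℝ) : ℝ :=
  ‖(Matrix.toEuclideanLin M).toContinuousLinearMap‖

/-!
Let `P`, `Q` be the orthogonal projections onto the spans `U`, `V` of the top `k` eigenvectors
of `A` and `Ã`, and `s = ‖(1 - Q) P‖`. For a top singular pair `v`, `w` of `(1 - Q) P` we have
`v ∈ U`, `w ∈ Vᗮ`, `P w = s v` and `(1 - Q) v = s w`; since `A` preserves `U` and `Ã` preserves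
`V`, this gives `⟪w, (A - Ã) v⟫ = s (⟪v, A v⟫ - ⟪w, Ã w⟫) ≥ s (λ_k(A) - λ_{k+1}(Ã))`.
Conversely `P - Q = P (1 - Q) - (1 - P) Q` is an orthogonal sum, `‖P (1 - Q)‖ = s` by taking
adjoints, and `‖(1 - P) Q‖ ≤ s` because `dim U = dim V`: when `s < 1`, `Q` maps `U` onto `V`.
-/

open Module Submodule RealInnerProductSpace ContinuousLinearMap
open scoped InnerProduct

section Operator

variable {E F : Type*} [NormedAddCommGroup E] [InnerProductSpace ℝ E]
  [NormedAddCommGroup F] [InnerProductSpace ℝ F]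

theorem ContinuousLinearMap.exists_norm_eq_one_norm_apply_eq_opNorm [FiniteDimensional ℝ E]
    [Nontrivial E] (T : E →L[ℝ] F) : ∃ v, ‖v‖ = 1 ∧ ‖T v‖ = ‖T‖ := by
  obtain ⟨v, hv, hTv⟩ := ((isCompact_sphere (0 : E) 1).image T.continuous.norm).sSup_mem
    ((NormedSpace.sphere_nonempty.2 zero_le_one).image _)
  exact ⟨v, mem_sphere_zero_iff_norm.1 hv, hTv.trans T.sSup_sphere_eq_norm⟩

theorem ContinuousLinearMap.adjoint_apply_apply_of_norm_apply_eq_opNorm_mul [CompleteSpace E]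
    [CompleteSpace F] (T : E →L[ℝ] F) {v : E} (hv : ‖T v‖ = ‖T‖ * ‖v‖) :
    (T†) (T v) = ‖T‖ ^ 2 • v := by
  have hinner : ⟪(T†) (T v), v⟫ = ‖T‖ ^ 2 * ‖v‖ ^ 2 := by
    rw [adjoint_inner_left, real_inner_self_eq_norm_sq, hv]
    ring
  have hle : ‖(T†) (T v)‖ ≤ ‖T‖ ^ 2 * ‖v‖ := by
    simpa [norm_adjoint_comp_self, sq] using (T† ∘L T).le_opNorm v
  have hzero : ‖(T†) (T v) - ‖T‖ ^ 2 • v‖ ^ 2 ≤ 0 := by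
    rw [norm_sub_sq_real, real_inner_smul_right, hinner, norm_smul,
      Real.norm_of_nonneg (by positivity)]
    nlinarith [norm_nonneg ((T†) (T v)), norm_nonneg v, norm_nonneg T]
  rw [← sub_eq_zero, ← norm_eq_zero]
  exact pow_eq_zero_iff two_ne_zero |>.1 (le_antisymm hzero (sq_nonneg _))

theorem ContinuousLinearMap.exists_singular_vectors_opNorm [FiniteDimensional ℝ E]
    [CompleteSpace F] (T : E →L[ℝ] F) (hT : T ≠ 0) :
    ∃ v w, ‖v‖ = 1 ∧ ‖w‖ = 1 ∧ T v = ‖T‖ • w ∧ (T†) w = ‖T‖ • v := by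
  obtain ⟨x, hx⟩ : ∃ x, T x ≠ 0 := by
    by_contra! h
    exact hT (ext h)
  have : Nontrivial E := nontrivial_of_ne x 0 (by rintro rfl; simp at hx)
  have hT0 : ‖T‖ ≠ 0 := norm_ne_zero_iff.2 hT
  obtain ⟨v, hv, hTv⟩ := T.exists_norm_eq_one_norm_apply_eq_opNorm
  refine ⟨v, ‖T‖⁻¹ • T v, hv, ?_, ?_, ?_⟩
  · rw [norm_smul, hTv, norm_inv, norm_norm, inv_mul_cancel₀ hT0]
  · rw [smul_smul, mul_inv_cancel₀ hT0, one_smul]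
  · rw [map_smul, T.adjoint_apply_apply_of_norm_apply_eq_opNorm_mul (by rw [hTv, hv, mul_one]),
      smul_smul, sq, ← mul_assoc, inv_mul_cancel₀ hT0, one_mul]

end Operator

namespace Submodule

variable {E : Type*} [NormedAddCommGroup E] [InnerProductSpace ℝ E] [FiniteDimensional ℝ E]

theorem adjoint_starProjection_comp_starProjection (U V : Submodule ℝ E) :
    adjoint (U.starProjection ∘L V.starProjection) = V.starProjection ∘L U.starProjection := by
  simp only [adjoint_comp, (isSelfAdjoint_starProjection _).adjoint_eq]

theorem sub_mul_norm_starProjection_comp_le {A B : E →L[ℝ] E} {U V : Submodule ℝ E} {a c : ℝ}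
    (hAU : ∀ x ∈ U, A x ∈ U) (hBV : ∀ y ∈ V, B y ∈ V)
    (ha : ∀ x ∈ U, a * ‖x‖ ^ 2 ≤ ⟪x, A x⟫) (hc : ∀ y ∈ Vᗮ, ⟪y, B y⟫ ≤ c * ‖y‖ ^ 2) :
    (a - c) * ‖Vᗮ.starProjection ∘L U.starProjection‖ ≤ ‖A - B‖ := by
  set S := Vᗮ.starProjection ∘L U.starProjection
  rcases eq_or_ne S 0 with hS | hS
  · simp [hS]
  have hs : ‖S‖ ≠ 0 := norm_ne_zero_iff.2 hS
  obtain ⟨v, w, hv, hw, hSv, hSw⟩ := S.exists_singular_vectors_opNorm hS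
  rw [adjoint_starProjection_comp_starProjection] at hSw
  have hvU : v ∈ U := (smul_mem_iff U hs).1 (hSw ▸ starProjection_apply_mem U _)
  have hwV : w ∈ Vᗮ := (smul_mem_iff Vᗮ hs).1 (hSv ▸ starProjection_apply_mem Vᗮ _)
  have hUw : U.starProjection w = ‖S‖ • v := by
    simpa [starProjection_eq_self_iff.2 hwV] using hSw
  have hVv : v = V.starProjection v + ‖S‖ • w := by
    rw [← hSv]
    simp [S, starProjection_eq_self_iff.2 hvU]
  have hAvw : ⟪w, A v⟫ = ‖S‖ * ⟪v, A v⟫ :=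
    calc ⟪w, A v⟫ = ⟪w, U.starProjection (A v)⟫ := by
          rw [starProjection_eq_self_iff.2 (hAU v hvU)]
      _ = ‖S‖ * ⟪v, A v⟫ := by
          rw [← inner_starProjection_left_eq_right, hUw, real_inner_smul_left]
  have hBvw : ⟪w, B v⟫ = ‖S‖ * ⟪w, B w⟫ := by
    conv_lhs => rw [hVv]
    rw [map_add, map_smul, inner_add_right, real_inner_smul_right,
      inner_left_of_mem_orthogonal (hBV _ (starProjection_apply_mem V v)) hwV, zero_add]
  have hAv := ha v hvU
  have hBw := hc w hwV
  rw [hv, one_pow, mul_one] at hAv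
  rw [hw, one_pow, mul_one] at hBw
  calc (a - c) * ‖S‖ ≤ ‖S‖ * ⟪v, A v⟫ - ‖S‖ * ⟪w, B w⟫ := by nlinarith [norm_nonneg S]
    _ = ⟪w, (A - B) v⟫ := by rw [_root_.sub_apply, inner_sub_right, hAvw, hBvw]
    _ ≤ ‖w‖ * ‖(A - B) v‖ := real_inner_le_norm _ _
    _ ≤ ‖A - B‖ := by simpa [hw, hv] using (A - B).le_opNorm v

theorem surjOn_starProjection_of_finrank_eq {U V : Submodule ℝ E}
    (h : finrank ℝ U = finrank ℝ V) (hUV : Disjoint U Vᗮ) : Set.SurjOn V.starProjection U V := by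
  let f : U →ₗ[ℝ] V := (V.orthogonalProjectionOnto : E →ₗ[ℝ] V) ∘ₗ U.subtype
  have hf : Function.Injective f := by
    rw [← LinearMap.ker_eq_bot, eq_bot_iff]
    intro z hz
    have hzV : (z : E) ∈ Vᗮ := orthogonalProjectionOnto_eq_zero_iff.1 hz
    exact (mem_bot ℝ).2 (Subtype.ext (hUV.le_bot ⟨z.2, hzV⟩))
  intro y hy
  obtain ⟨z, hz⟩ := (LinearMap.injective_iff_surjective_of_finrank_eq_finrank h).1 hf ⟨y, hy⟩
  exact ⟨z, z.2, congrArg Subtype.val hz⟩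

theorem one_sub_sq_mul_norm_sq_le_norm_starProjection_sq {U V : Submodule ℝ E} {z : E}
    (hz : z ∈ U) :
    (1 - ‖Vᗮ.starProjection ∘L U.starProjection‖ ^ 2) * ‖z‖ ^ 2 ≤ ‖V.starProjection z‖ ^ 2 := by
  have hVz : ‖Vᗮ.starProjection z‖ ≤ ‖Vᗮ.starProjection ∘L U.starProjection‖ * ‖z‖ := by
    simpa [starProjection_eq_self_iff.2 hz] using
      (Vᗮ.starProjection ∘L U.starProjection).le_opNorm z
  nlinarith [norm_sq_eq_add_norm_sq_starProjection z V, norm_nonneg (Vᗮ.starProjection z)]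

theorem one_sub_sq_mul_norm_sq_le_norm_starProjection_sq_of_finrank_eq {U V : Submodule ℝ E}
    (h : finrank ℝ U = finrank ℝ V) {y : E} (hy : y ∈ V) :
    (1 - ‖Vᗮ.starProjection ∘L U.starProjection‖ ^ 2) * ‖y‖ ^ 2 ≤ ‖U.starProjection y‖ ^ 2 := by
  set s := ‖Vᗮ.starProjection ∘L U.starProjection‖
  rcases le_or_gt 1 s with hs | hs
  · have hs' : 1 - s ^ 2 ≤ 0 := by nlinarith
    exact (mul_nonpos_of_nonpos_of_nonneg hs' (sq_nonneg _)).trans (sq_nonneg _)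
  have hs' : 0 < 1 - s ^ 2 := by nlinarith [norm_nonneg (Vᗮ.starProjection ∘L U.starProjection)]
  have hUV : Disjoint U Vᗮ := by
    refine disjoint_def.2 fun z hzU hzV => norm_eq_zero.1 ?_
    have hz := one_sub_sq_mul_norm_sq_le_norm_starProjection_sq (V := V) hzU
    rw [(starProjection_apply_eq_zero_iff V).2 hzV, norm_zero] at hz
    exact (pow_eq_zero_iff two_ne_zero).1 (le_antisymm (by nlinarith) (sq_nonneg _))
  obtain ⟨z, hzU, rfl⟩ := surjOn_starProjection_of_finrank_eq h hUV hy
  have hinner : ‖V.starProjection z‖ ^ 2 = ⟪U.starProjection (V.starProjection z), z⟫ := by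
    rw [inner_starProjection_left_eq_right, starProjection_eq_self_iff.2 hzU,
      ← real_inner_self_eq_norm_sq, ← inner_starProjection_left_eq_right,
      starProjection_eq_self_iff.2 (starProjection_apply_mem V z)]
  set y := V.starProjection z
  have hCS : ‖y‖ ^ 2 ≤ ‖U.starProjection y‖ * ‖z‖ := hinner ▸ real_inner_le_norm _ z
  have key : (1 - s ^ 2) * ‖y‖ ^ 2 * ‖y‖ ^ 2 ≤ ‖U.starProjection y‖ ^ 2 * ‖y‖ ^ 2 :=
    calc (1 - s ^ 2) * ‖y‖ ^ 2 * ‖y‖ ^ 2 ≤ (1 - s ^ 2) * (‖U.starProjection y‖ * ‖z‖) ^ 2 := by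
          rw [mul_assoc, ← sq]
          gcongr
      _ = ‖U.starProjection y‖ ^ 2 * ((1 - s ^ 2) * ‖z‖ ^ 2) := by ring
      _ ≤ ‖U.starProjection y‖ ^ 2 * ‖y‖ ^ 2 := by
          gcongr
          exact one_sub_sq_mul_norm_sq_le_norm_starProjection_sq hzU
  rcases (sq_nonneg ‖y‖).eq_or_lt with hy0 | hy0
  · simp [← hy0]
  · exact le_of_mul_le_mul_right key hy0

theorem norm_orthogonal_starProjection_comp_le_of_finrank_eq {U V : Submodule ℝ E}
    (h : finrank ℝ U = finrank ℝ V) :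
    ‖Uᗮ.starProjection ∘L V.starProjection‖ ≤ ‖Vᗮ.starProjection ∘L U.starProjection‖ := by
  set s := ‖Vᗮ.starProjection ∘L U.starProjection‖
  refine opNorm_le_bound _ (norm_nonneg _) fun x => ?_
  rw [ContinuousLinearMap.comp_apply]
  set y := V.starProjection x
  have hcos : (1 - s ^ 2) * ‖y‖ ^ 2 ≤ ‖U.starProjection y‖ ^ 2 :=
    one_sub_sq_mul_norm_sq_le_norm_starProjection_sq_of_finrank_eq h (starProjection_apply_mem V x)
  have hy : s ^ 2 * ‖y‖ ^ 2 ≤ s ^ 2 * ‖x‖ ^ 2 := by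
    gcongr
    exact norm_starProjection_apply_le V x
  have hsq : ‖Uᗮ.starProjection y‖ ^ 2 ≤ (s * ‖x‖) ^ 2 := by
    nlinarith [norm_sq_eq_add_norm_sq_starProjection y U]
  exact pow_le_pow_iff_left₀ (norm_nonneg _) (by positivity) two_ne_zero |>.1 hsq

theorem norm_starProjection_sub_starProjection_le {U V : Submodule ℝ E} {m : ℝ}
    (hUV : ‖U.starProjection ∘L Vᗮ.starProjection‖ ≤ m)
    (hVU : ‖Uᗮ.starProjection ∘L V.starProjection‖ ≤ m) :
    ‖U.starProjection - V.starProjection‖ ≤ m := by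
  have hm : 0 ≤ m := (norm_nonneg _).trans hUV
  refine opNorm_le_bound _ hm fun x => ?_
  set p := U.starProjection (Vᗮ.starProjection x)
  set q := Uᗮ.starProjection (V.starProjection x)
  have hdecomp : (U.starProjection - V.starProjection) x = p - q := by
    simp only [p, q, _root_.sub_apply, starProjection_orthogonal_val, map_sub]
    abel
  have hp : ‖p‖ ≤ m * ‖Vᗮ.starProjection x‖ := by
    have := le_of_opNorm_le _ hUV (Vᗮ.starProjection x)
    rwa [ContinuousLinearMap.comp_apply,
      starProjection_eq_self_iff.2 (starProjection_apply_mem Vᗮ x)] at this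
  have hq : ‖q‖ ≤ m * ‖V.starProjection x‖ := by
    have := le_of_opNorm_le _ hVU (V.starProjection x)
    rwa [ContinuousLinearMap.comp_apply,
      starProjection_eq_self_iff.2 (starProjection_apply_mem V x)] at this
  have hpq : ‖p - q‖ * ‖p - q‖ = ‖p‖ * ‖p‖ + ‖q‖ * ‖q‖ :=
    norm_sub_sq_eq_norm_sq_add_norm_sq_real
      (inner_right_of_mem_orthogonal (starProjection_apply_mem U _) (starProjection_apply_mem Uᗮ _))
  have hsq : ‖p - q‖ ^ 2 ≤ (m * ‖x‖) ^ 2 := by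
    nlinarith [mul_self_le_mul_self (norm_nonneg p) hp, mul_self_le_mul_self (norm_nonneg q) hq,
      congrArg (m ^ 2 * ·) (norm_sq_eq_add_norm_sq_starProjection x V)]
  rw [hdecomp]
  exact pow_le_pow_iff_left₀ (norm_nonneg _) (by positivity) two_ne_zero |>.1 hsq

theorem norm_starProjection_sub_starProjection_le_of_finrank_eq {U V : Submodule ℝ E}
    (h : finrank ℝ U = finrank ℝ V) :
    ‖U.starProjection - V.starProjection‖ ≤ ‖Vᗮ.starProjection ∘L U.starProjection‖ := by
  refine norm_starProjection_sub_starProjection_le ?_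
    (norm_orthogonal_starProjection_comp_le_of_finrank_eq h)
  rw [← adjoint_starProjection_comp_starProjection, LinearIsometryEquiv.norm_map]

end Submodule

theorem LinearIndependent.finrank_span_image {ι V : Type*} [AddCommGroup V] [Module ℝ V]
    {e : ι → V} (he : LinearIndependent ℝ e) (s : Finset ι) :
    finrank ℝ (span ℝ (e '' s)) = s.card := by
  rw [Set.image_eq_range]
  exact (finrank_span_eq_card (he.comp _ Subtype.val_injective)).trans (Fintype.card_coe s)

namespace OrthonormalBasis

variable {ι E : Type*} [Fintype ι] [NormedAddCommGroup E] [InnerProductSpace ℝ E]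
  (b : OrthonormalBasis ι ℝ E) {T : E →L[ℝ] E} {μ : ι → ℝ}

theorem inner_apply_self_eq_sum (hT : ∀ i, T (b i) = μ i • b i) (x : E) :
    ⟪x, T x⟫ = ∑ i, μ i * ⟪b i, x⟫ ^ 2 := by
  have hTx : T x = ∑ i, (μ i * ⟪b i, x⟫) • b i := by
    conv_lhs => rw [← b.sum_repr' x]
    simp only [map_sum, map_smul, hT, smul_smul, mul_comm]
  rw [← b.sum_inner_mul_inner x (T x)]
  refine Finset.sum_congr rfl fun i _ => ?_
  rw [hTx, b.orthonormal.inner_right_fintype, real_inner_comm]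
  ring

theorem mul_norm_sq_le_inner_apply_self (hT : ∀ i, T (b i) = μ i • b i)
    {a : ℝ} {x : E} (hx : ∀ i, ⟪b i, x⟫ ≠ 0 → a ≤ μ i) : a * ‖x‖ ^ 2 ≤ ⟪x, T x⟫ := by
  rw [b.inner_apply_self_eq_sum hT, ← b.sum_sq_inner_right, Finset.mul_sum]
  refine Finset.sum_le_sum fun i _ => ?_
  by_cases hi : ⟪b i, x⟫ = 0
  · simp [hi]
  · exact mul_le_mul_of_nonneg_right (hx i hi) (sq_nonneg _)

theorem inner_apply_self_le_mul_norm_sq (hT : ∀ i, T (b i) = μ i • b i)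
    {c : ℝ} {x : E} (hx : ∀ i, ⟪b i, x⟫ ≠ 0 → μ i ≤ c) : ⟪x, T x⟫ ≤ c * ‖x‖ ^ 2 := by
  rw [b.inner_apply_self_eq_sum hT, ← b.sum_sq_inner_right, Finset.mul_sum]
  refine Finset.sum_le_sum fun i _ => ?_
  by_cases hi : ⟪b i, x⟫ = 0
  · simp [hi]
  · exact mul_le_mul_of_nonneg_right (hx i hi) (sq_nonneg _)

theorem inner_eq_zero_of_mem_span {s : Set ι} {i : ι} (hi : i ∉ s) {x : E}
    (hx : x ∈ span ℝ (b '' s)) : ⟪b i, x⟫ = 0 := by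
  refine mem_orthogonal_singleton_iff_inner_right.1 (span_le.2 ?_ hx)
  rintro _ ⟨j, hj, rfl⟩
  exact mem_orthogonal_singleton_iff_inner_right.2
    (b.orthonormal.inner_eq_zero fun hij => hi (hij ▸ hj))

theorem apply_mem_span_of_mem_span (hT : ∀ i, T (b i) = μ i • b i) {s : Set ι}
    {x : E} (hx : x ∈ span ℝ (b '' s)) : T x ∈ span ℝ (b '' s) := by
  have hinv : span ℝ (b '' s) ≤ (span ℝ (b '' s)).comap (T : E →ₗ[ℝ] E) := by
    refine span_le.2 ?_
    rintro _ ⟨i, hi, rfl⟩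
    exact mem_comap.2 (hT i ▸ smul_mem _ _ (subset_span ⟨i, hi, rfl⟩))
  exact hinv hx

theorem norm_starProjection_sub_starProjection_le_div [FiniteDimensional ℝ E]
    (b' : OrthonormalBasis ι ℝ E) {A B : E →L[ℝ] E} {ν : ι → ℝ}
    (hA : ∀ i, A (b i) = μ i • b i) (hB : ∀ i, B (b' i) = ν i • b' i) {s : Finset ι} {a c : ℝ}
    (ha : ∀ i ∈ s, a ≤ μ i) (hc : ∀ i ∉ s, ν i ≤ c) (hgap : c < a) :
    ‖(span ℝ (b '' s)).starProjection - (span ℝ (b' '' s)).starProjection‖ ≤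
      ‖A - B‖ / (a - c) := by
  have hUV : finrank ℝ (span ℝ (b '' s)) = finrank ℝ (span ℝ (b' '' s)) := by
    rw [b.orthonormal.linearIndependent.finrank_span_image,
      b'.orthonormal.linearIndependent.finrank_span_image]
  have hsin := sub_mul_norm_starProjection_comp_le (fun x => b.apply_mem_span_of_mem_span hA)
    (fun y => b'.apply_mem_span_of_mem_span hB)
    (fun x hx => b.mul_norm_sq_le_inner_apply_self hA fun i hi =>
      ha i (not_not.1 fun his => hi (b.inner_eq_zero_of_mem_span his hx)))
    (fun y hy => b'.inner_apply_self_le_mul_norm_sq hB fun i hi => hc i fun his =>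
      hi (inner_right_of_mem_orthogonal (subset_span (Set.mem_image_of_mem b' his)) hy))
  rw [le_div_iff₀ (sub_pos.2 hgap), mul_comm]
  exact (mul_le_mul_of_nonneg_left (norm_starProjection_sub_starProjection_le_of_finrank_eq hUV)
    (sub_pos.2 hgap).le).trans hsin

end OrthonormalBasis

theorem specNorm_eq_norm_toEuclideanCLM {n : ℕ} (M : Matrix (Fin n) (Fin n) ℝ) :
    specNorm M = ‖toEuclideanCLM (𝕜 := ℝ) M‖ := rfl

theorem Matrix.toEuclideanCLM_vecMulVec {m : Type*} [Fintype m] [DecidableEq m]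
    (x y : EuclideanSpace ℝ m) :
    toEuclideanCLM (𝕜 := ℝ) (vecMulVec (WithLp.ofLp x) (WithLp.ofLp y)) =
      InnerProductSpace.rankOne ℝ x y := by
  apply ContinuousLinearMap.coe_injective
  rw [coe_toEuclideanCLM_eq_toEuclideanLin, ← LinearEquiv.eq_symm_apply,
    InnerProductSpace.symm_toEuclideanLin_rankOne, star_trivial]

theorem Matrix.toEuclideanCLM_sum_vecMulVec {m ι : Type*} [Fintype m] [DecidableEq m]
    {e : ι → EuclideanSpace ℝ m} (he : Orthonormal ℝ e) (s : Finset ι) :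
    toEuclideanCLM (𝕜 := ℝ) (∑ i ∈ s, vecMulVec (WithLp.ofLp (e i)) (WithLp.ofLp (e i))) =
      (span ℝ (e '' s)).starProjection := by
  classical
  have h := (OrthonormalBasis.span he s).starProjection_eq_sum_rankOne
  simp only [Finset.coe_image, OrthonormalBasis.span_apply] at h
  rw [h, map_sum, ← Finset.sum_coe_sort s]
  simp only [toEuclideanCLM_vecMulVec]

theorem EuclideanSpace.exists_orthonormalBasis_toLp {ι : Type*} [Fintype ι] [DecidableEq ι]
    {u : ι → ι → ℝ} (hu : ∀ i j, u i ⬝ᵥ u j = if i = j then 1 else 0) :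
    ∃ b : OrthonormalBasis ι ℝ (EuclideanSpace ℝ ι), ∀ i, b i = WithLp.toLp 2 (u i) := by
  have hon : Orthonormal ℝ fun i => WithLp.toLp 2 (u i) := by
    rw [orthonormal_iff_ite]
    intro i j
    rw [EuclideanSpace.inner_toLp_toLp, dotProduct_comm]
    simpa using hu i j
  refine ⟨OrthonormalBasis.mk hon (hon.linearIndependent.span_eq_top_of_card_eq_finrank' ?_).ge,
    fun i => by simp⟩
  simp

/-- **Davis–Kahan sin Θ theorem.** Let `A` and `Ã` be symmetric matrices with
orthonormal eigenbases `u`, `ũ` and eigenvalues `lam`, `lamt` in descending order.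
If `λ_k(A) > λ_{k+1}(Ã)` then, with `P_k` and `P̃_k` the projections onto the top `k`
eigenvectors of `A` and `Ã` respectively,
`‖P_k − P̃_k‖₂ ≤ ‖A − Ã‖₂ / (λ_k(A) − λ_{k+1}(Ã))`. -/
theorem davis_kahan_sin_theta
    (n k : ℕ) (hkn : k < n)
    (A At : Matrix (Fin n) (Fin n) ℝ)
    (u ut : Fin n → Fin n → ℝ) (lam lamt : Fin n → ℝ)
    (h_orth : ∀ i j, dotProduct (u i) (u j) = if i = j then 1 else 0)
    (ht_orth : ∀ i j, dotProduct (ut i) (ut j) = if i = j then 1 else 0)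
    (h_eig : ∀ i, A.mulVec (u i) = lam i • u i)
    (ht_eig : ∀ i, At.mulVec (ut i) = lamt i • ut i)
    (h_anti : Antitone lam) (ht_anti : Antitone lamt)
    (h_gap : lamt ⟨k, hkn⟩ < lam ⟨k - 1, by omega⟩)
    (Pk Ptk : Matrix (Fin n) (Fin n) ℝ)
    (hPk : Pk = ∑ i : Fin n, if (i : ℕ) < k then Matrix.vecMulVec (u i) (u i) else 0)
    (hPtk : Ptk = ∑ i : Fin n, if (i : ℕ) < k then Matrix.vecMulVec (ut i) (ut i) else 0) :
    specNorm (Pk - Ptk) ≤ specNorm (A - At) / (lam ⟨k - 1, by omega⟩ - lamt ⟨k, hkn⟩) := by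
  obtain ⟨b, hb⟩ := EuclideanSpace.exists_orthonormalBasis_toLp h_orth
  obtain ⟨bt, hbt⟩ := EuclideanSpace.exists_orthonormalBasis_toLp ht_orth
  set s := Finset.univ.filter fun i : Fin n => (i : ℕ) < k
  have hP : toEuclideanCLM (𝕜 := ℝ) Pk = (span ℝ (b '' s)).starProjection := by
    rw [← toEuclideanCLM_sum_vecMulVec b.orthonormal s, hPk, ← Finset.sum_filter]
    simp [hb, s]
  have hPt : toEuclideanCLM (𝕜 := ℝ) Ptk = (span ℝ (bt '' s)).starProjection := by
    rw [← toEuclideanCLM_sum_vecMulVec bt.orthonormal s, hPtk, ← Finset.sum_filter]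
    simp [hbt, s]
  rw [specNorm_eq_norm_toEuclideanCLM, specNorm_eq_norm_toEuclideanCLM, map_sub, map_sub, hP, hPt]
  refine b.norm_starProjection_sub_starProjection_le_div bt (μ := lam) (ν := lamt) (fun i => ?_)
    (fun i => ?_) (fun i hi => h_anti ?_) (fun i hi => ht_anti ?_) h_gap
  · rw [hb, toEuclideanCLM_toLp, h_eig, WithLp.toLp_smul]
  · rw [hbt, toEuclideanCLM_toLp, ht_eig, WithLp.toLp_smul]
  · simp only [s, Finset.mem_filter_univ] at hi
    exact Fin.le_def.2 (Nat.le_sub_one_of_lt hi)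
  · simpa [s, Fin.le_def] using hi
end
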